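/- Modulo the equivalence relation ∼ (mutual P-embeddability), there are only finitely many P-labelled trees. -/

import Mathlib

/-- A `P`-labelled tree: a finite node set `N`, an edge relation `E` such that
`(N,E)` is a (rooted, directed) tree, and a `≤`-monotone labelling `λ : N → P`. -/
structure PTree (P : Type) [PartialOrder P] where
  N : Type
  [fin : Fintype N]
  E : N → N → Prop
  label : N → P
  isTree : ∃ r : N, (∀ n, Relation.ReflTransGen E r n) ∧
      (∀ n, n ≠ r → ∃! m, E m n) ∧ (∀ n, ¬ E n r)
  mono : ∀ i j, E i j → label i ≤ label j

/-- A `P`-embedding of `T` into `T'`. -/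
def TreeEmb {P : Type} [PartialOrder P] (T T' : PTree P) (f : T.N → T'.N) : Prop :=
  (∀ i j, T.E i j → Relation.ReflTransGen T'.E (f i) (f j)) ∧
  (∀ k, T.label k = T'.label (f k))

/-- Two `P`-labelled trees are equivalent if each `P`-embeds into the other. -/
def TreeEquiv {P : Type} [PartialOrder P] (T T' : PTree P) : Prop :=
  (∃ f, TreeEmb T T' f) ∧ (∃ g, TreeEmb T' T g)

/-- A `P`-labelled tree is strict if labels strictly increase along edges. -/
def StrictTree {P : Type} [PartialOrder P] (T : PTree P) : Prop :=
  ∀ i j, T.E i j → T.label i < T.label j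

/-- The subtrees of `T` rooted at `i` and at `j` are `P`-isomorphic. -/
def SubIso {P : Type} [PartialOrder P] (T : PTree P) (i j : T.N) : Prop :=
  ∃ g : {n : T.N // Relation.ReflTransGen T.E i n} ≃
        {n : T.N // Relation.ReflTransGen T.E j n},
    (∀ a b, T.E a.1 b.1 ↔ T.E (g a).1 (g b).1) ∧
    (∀ a, T.label a.1 = T.label (g a).1)

/-- A `P`-isomorphism between labelled trees. -/
def PIso {P : Type} [PartialOrder P] (T T' : PTree P) : Prop :=
  ∃ e : T.N ≃ T'.N, (∀ i j, T.E i j ↔ T'.E (e i) (e j)) ∧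
    (∀ k, T.label k = T'.label (e k))

/-!
Collapse every plateau of equal labels to a point and forget repeated subtrees: the shape of the
subtree at a node `n` is the label of `n` together with the set of shapes of the subtrees at the
nodes where the label first rises above it. Labels strictly increase along this recursion, so its
depth is at most `|P|` and there are only finitely many shapes. Trees of the same shape embed into
each other: the plateau below `n` is sent to `n'`, and each subtree where the label first rises is
embedded into a subtree of the same shape below `n'`.
-/

open Relation

theorem exists_fin_reps_of_invariant {α β : Type*} [Finite β] (ι : α → β) (R : α → α → Prop)
    (hR : ∀ a b, ι a = ι b → R a b) : ∃ (k : ℕ) (reps : Fin k → α), ∀ a, ∃ i, R a (reps i) := by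
  let e := Finite.equivFin (Set.range ι)
  refine ⟨_, fun i => (e.symm i).2.choose, fun a => ⟨e ⟨ι a, a, rfl⟩, hR _ _ ?_⟩⟩
  rw [(e.symm _).2.choose_spec, e.symm_apply_apply]

namespace PTree

variable {P : Type} [PartialOrder P]

noncomputable def root (T : PTree P) : T.N := T.isTree.choose

theorem reflTransGen_root (T : PTree P) (n : T.N) : ReflTransGen T.E T.root n :=
  T.isTree.choose_spec.1 n

theorem eq_of_edge_of_edge (T : PTree P) {a b k : T.N} (ha : T.E a k) (hb : T.E b k) : a = b := by
  obtain ⟨r, -, hpar, hr⟩ := T.isTree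
  exact (hpar k fun hk => hr a (hk ▸ ha)).unique ha hb

theorem reflTransGen_total_of_reflTransGen (T : PTree P) {a b k : T.N}
    (ha : ReflTransGen T.E a k) (hb : ReflTransGen T.E b k) :
    ReflTransGen T.E a b ∨ ReflTransGen T.E b a := by
  rw [← reflTransGen_swap] at ha hb
  exact (ReflTransGen.total_of_right_unique (r := Function.swap T.E)
    (fun _ _ _ => T.eq_of_edge_of_edge) ha hb).symm.imp reflTransGen_swap.mp reflTransGen_swap.mp

theorem label_le_of_reflTransGen (T : PTree P) {a b : T.N} (h : ReflTransGen T.E a b) :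
    T.label a ≤ T.label b := by
  induction h with
  | refl => exact le_rfl
  | tail _ hbc ih => exact ih.trans (T.mono _ _ hbc)

def firstRises (T : PTree P) (n : T.N) : Set T.N :=
  {m | ReflTransGen T.E n m ∧ T.label m ≠ T.label n ∧ ∃ p, T.E p m ∧ T.label p = T.label n}

theorem label_lt_of_mem_firstRises {T : PTree P} {n m : T.N} (hm : m ∈ T.firstRises n) :
    T.label n < T.label m :=
  (T.label_le_of_reflTransGen hm.1).lt_of_ne' hm.2.1

theorem exists_mem_firstRises {T : PTree P} {n k : T.N} (hk : ReflTransGen T.E n k)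
    (hne : T.label k ≠ T.label n) : ∃ m ∈ T.firstRises n, ReflTransGen T.E m k := by
  induction hk with
  | refl => exact absurd rfl hne
  | @tail b c hnb hbc ih =>
    by_cases hb : T.label b = T.label n
    · exact ⟨c, ⟨hnb.tail hbc, hne, b, hbc, hb⟩, .refl⟩
    · obtain ⟨m, hm, hmb⟩ := ih hb
      exact ⟨m, hm, hmb.tail hbc⟩

theorem firstRises_unique {T : PTree P} {n m₁ m₂ k : T.N}
    (h₁ : m₁ ∈ T.firstRises n) (h₂ : m₂ ∈ T.firstRises n)
    (hk₁ : ReflTransGen T.E m₁ k) (hk₂ : ReflTransGen T.E m₂ k) : m₁ = m₂ := by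
  suffices key : ∀ {a b}, a ∈ T.firstRises n → b ∈ T.firstRises n →
      ReflTransGen T.E a b → a = b by
    rcases T.reflTransGen_total_of_reflTransGen hk₁ hk₂ with h | h
    · exact key h₁ h₂ h
    · exact (key h₂ h₁ h).symm
  intro a b ha hb hab
  rcases hab.cases_tail with rfl | ⟨p, hap, hpb⟩
  · rfl
  obtain ⟨-, -, q, hqb, hq⟩ := hb
  -- the label of `a` is at most that of `p`, which is the label of `n`
  have hpa : T.label a ≤ T.label n :=
    hq ▸ T.eq_of_edge_of_edge hpb hqb ▸ T.label_le_of_reflTransGen hap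
  exact ((label_lt_of_mem_firstRises ha).not_ge hpa).elim

def EmbedsAt (T T' : PTree P) (n : T.N) (n' : T'.N) (f : T.N → T'.N) : Prop :=
  ∀ i, ReflTransGen T.E n i → ReflTransGen T'.E n' (f i) ∧ T.label i = T'.label (f i) ∧
    ∀ j, T.E i j → ReflTransGen T'.E (f i) (f j)

theorem treeEmb_of_embedsAt_root {T T' : PTree P} {f : T.N → T'.N}
    (hf : EmbedsAt T T' T.root T'.root f) : TreeEmb T T' f :=
  ⟨fun i j => (hf i (T.reflTransGen_root i)).2.2 j, fun k => (hf k (T.reflTransGen_root k)).2.1⟩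

theorem exists_embedsAt_of_firstRises {T T' : PTree P} {n : T.N} {n' : T'.N}
    (hlabel : T.label n = T'.label n')
    (hrises : ∀ m ∈ T.firstRises n, ∃ m', ReflTransGen T'.E n' m' ∧ ∃ g, EmbedsAt T T' m m' g) :
    ∃ f, EmbedsAt T T' n n' f := by
  classical
  have : Nonempty T.N := ⟨n⟩
  have : Nonempty T'.N := ⟨n'⟩
  choose! m' hm' g hg using hrises
  choose! anc hanc hanck using fun k (hk : ReflTransGen T.E n k) (hne : T.label k ≠ T.label n) =>
    exists_mem_firstRises hk hne
  refine ⟨fun k => if T.label k = T.label n then n' else g (anc k) k, fun i hi => ?_⟩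
  dsimp only
  by_cases hin : T.label i = T.label n
  · refine ⟨by rw [if_pos hin], by rw [if_pos hin, hin, hlabel], fun j hij => ?_⟩
    simp only [if_pos hin]
    split_ifs with hjn
    · exact .refl
    · have hj := hi.tail hij
      exact (hm' _ (hanc j hj hjn)).trans (hg _ (hanc j hj hjn) j (hanck j hj hjn)).1
  · obtain ⟨hreach, hlab, hedge⟩ := hg _ (hanc i hi hin) i (hanck i hi hin)
    refine ⟨?_, ?_, fun j hij => ?_⟩
    · simpa only [if_neg hin] using (hm' _ (hanc i hi hin)).trans hreach
    · simpa only [if_neg hin] using hlab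
    have hjn : T.label j ≠ T.label n := fun hjn =>
      hin (le_antisymm (hjn ▸ T.mono i j hij) (T.label_le_of_reflTransGen hi))
    have hj := hi.tail hij
    have hanc_eq : anc j = anc i := firstRises_unique (hanc j hj hjn) (hanc i hi hin)
      (hanck j hj hjn) ((hanck i hi hin).tail hij)
    simpa only [if_neg hin, if_neg hjn, hanc_eq] using hedge j hij

def Shape (P : Type) : ℕ → Type
  | 0 => PUnit
  | d + 1 => P × Set (Shape P d)

instance Shape.finite [Finite P] : ∀ d, Finite (Shape P d)
  | 0 => inferInstanceAs (Finite PUnit)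
  | d + 1 =>
    have := Shape.finite d
    inferInstanceAs (Finite (P × Set (Shape P d)))

def shape (T : PTree P) : (d : ℕ) → T.N → Shape P d
  | 0, _ => PUnit.unit
  | d + 1, n => (T.label n, T.shape d '' T.firstRises n)

theorem exists_embedsAt_of_shape_eq [Finite P] :
    ∀ (d : ℕ) {T T' : PTree P} {n : T.N} {n' : T'.N}, (Set.Ici (T.label n)).ncard ≤ d →
      T.shape d n = T'.shape d n' → ∃ f, EmbedsAt T T' n n' f
  | 0, T, _, n, _, hd, _ =>
    absurd hd <| Nat.not_le.mpr <|
      (Set.ncard_pos (Set.toFinite _)).mpr ⟨T.label n, Set.self_mem_Ici⟩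
  | d + 1, T, T', n, n', hd, hshape => by
    obtain ⟨hlabel, himage⟩ := Prod.mk.inj hshape
    refine exists_embedsAt_of_firstRises hlabel fun m hm => ?_
    obtain ⟨m', hm', hshape'⟩ : T.shape d m ∈ T'.shape d '' T'.firstRises n' :=
      himage ▸ Set.mem_image_of_mem _ hm
    have hdm : (Set.Ici (T.label m)).ncard ≤ d := Nat.le_of_lt_succ <| hd.trans_lt' <|
      Set.ncard_lt_ncard (Set.Ici_ssubset_Ici.mpr (label_lt_of_mem_firstRises hm))
    exact ⟨m', hm'.1, exists_embedsAt_of_shape_eq d hdm hshape'.symm⟩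

end PTree

/-- modulo mutual embeddability, there are only finitely many
`P`-labelled trees. -/
theorem stmt1 (P : Type) [Fintype P] [PartialOrder P] :
    ∃ (k : ℕ) (reps : Fin k → PTree P),
      ∀ T : PTree P, ∃ a : Fin k, TreeEquiv T (reps a) := by
  have hcard (T : PTree P) : (Set.Ici (T.label T.root)).ncard ≤ Fintype.card P :=
    Nat.card_eq_fintype_card (α := P) ▸ Set.ncard_le_card _
  have hemb {T T' : PTree P} (h : T.shape _ T.root = T'.shape _ T'.root) : ∃ f, TreeEmb T T' f :=
    (PTree.exists_embedsAt_of_shape_eq _ (hcard T) h).imp fun _ => PTree.treeEmb_of_embedsAt_root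
  exact exists_fin_reps_of_invariant (fun T : PTree P => T.shape (Fintype.card P) T.root) TreeEquiv
    fun T T' h => ⟨hemb h, hemb h.symm⟩
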